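/- For every ε ∈ (0, 1/100] and every z ∈ ℂ with |z| < 1+ε and |1+z| > ε^{1/4}, the number z e^{z+1} does not lie in the real interval (−∞, −1]. -/

import Mathlib

/-!
Off the real axis, `Im (z e^{z+1}) = 0` means `x sin t + t cos t = 0` for `z = x + i t`, i.e.
`z = -ρ e^{-it}` with `ρ = ‖z‖ = t / sin t`. Writing `t = 2ρ sin (t/2) cos (t/2)` and using
`|sin (t/2)| ≤ |t|/2` gives `ρ cos (t/2) ≥ 1`, hence
`‖1 + z‖² = (1 + ρ)² - 4ρ cos² (t/2) ≤ (1 + ρ)² - 4/ρ < 9ε < √ε` when `ρ < 1 + ε`.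
On the real axis, `x e^{x+1} > -1` unless `x = -1`, which `‖1 + z‖ > ε^{1/4}` excludes.
-/

open Complex

lemma Real.neg_one_lt_mul_exp_add_one {x : ℝ} (hx : x ≠ -1) : -1 < x * Real.exp (x + 1) := by
  have hlt := Real.add_one_lt_exp (x := -(x + 1)) (by contrapose! hx; linarith)
  have hinv : Real.exp (-(x + 1)) * Real.exp (x + 1) = 1 := by
    rw [← Real.exp_add, neg_add_cancel, Real.exp_zero]
  nlinarith [Real.exp_pos (x + 1)]

lemma Real.mul_sin_self_pos {t : ℝ} (ht : t ≠ 0) (hπ : |t| < Real.pi) : 0 < t * Real.sin t := by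
  rcases ht.lt_or_gt with hneg | hpos
  · exact mul_pos_of_neg_of_neg hneg
      (Real.sin_neg_of_neg_of_neg_pi_lt hneg (by linarith [neg_abs_le t]))
  · exact mul_pos hpos (Real.sin_pos_of_pos_of_lt_pi hpos (lt_of_abs_lt hπ))

lemma polar_of_mul_sin_add_mul_cos_eq_zero {x t : ℝ} (h : x * Real.sin t + t * Real.cos t = 0) :
    ∃ ρ : ℝ, x = -ρ * Real.cos t ∧ t = ρ * Real.sin t := by
  have hpy := Real.sin_sq_add_cos_sq t
  refine ⟨t * Real.sin t - x * Real.cos t, ?_, ?_⟩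
  · linear_combination (-x) * hpy + Real.sin t * h
  · linear_combination (-t) * hpy + Real.cos t * h

lemma pos_of_eq_mul_sin {ρ t : ℝ} (ht : t ≠ 0) (hρ : |ρ| < Real.pi) (h : t = ρ * Real.sin t) :
    0 < ρ := by
  have hle : |t| ≤ |ρ| := by
    conv_lhs => rw [h]
    rw [abs_mul]
    exact mul_le_of_le_one_right (abs_nonneg ρ) (Real.abs_sin_le_one t)
  have hpos := Real.mul_sin_self_pos ht (hle.trans_lt hρ)
  nth_rw 1 [h] at hpos
  nlinarith [sq_nonneg (Real.sin t)]

lemma one_le_abs_mul_cos_half {ρ t : ℝ} (ht : t ≠ 0) (h : t = ρ * Real.sin t) :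
    1 ≤ |ρ * Real.cos (t / 2)| := by
  have hsin : |Real.sin (t / 2)| ≤ |t| / 2 := by
    simpa [abs_div] using Real.abs_sin_le_abs (x := t / 2)
  have hdouble : Real.sin t = 2 * Real.sin (t / 2) * Real.cos (t / 2) := by
    rw [← Real.sin_two_mul, mul_div_cancel₀ t two_ne_zero]
  have habs : |t| = 2 * |Real.sin (t / 2)| * |ρ * Real.cos (t / 2)| := by
    conv_lhs => rw [h, hdouble]
    simp only [abs_mul, abs_two]
    ring
  nlinarith [abs_pos.2 ht, abs_nonneg (ρ * Real.cos (t / 2))]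

lemma Complex.im_mul_exp_add_one (z : ℂ) :
    (z * exp (z + 1)).im =
      Real.exp (z.re + 1) * (z.re * Real.sin z.im + z.im * Real.cos z.im) := by
  rw [mul_im, exp_re, exp_im, add_re, add_im, one_re, one_im, add_zero]
  ring

lemma Complex.neg_one_lt_re_mul_exp_add_one {z : ℂ} (hz : z.im = 0) (hz₁ : z ≠ -1) :
    -1 < (z * exp (z + 1)).re := by
  obtain ⟨x, rfl⟩ : ∃ x : ℝ, z = x := ⟨z.re, Complex.ext rfl (by simp [hz])⟩
  have hreal : (x : ℂ) * exp (x + 1) = ((x * Real.exp (x + 1) : ℝ) : ℂ) := by push_cast; rfl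
  rw [hreal, ofReal_re]
  exact Real.neg_one_lt_mul_exp_add_one (by contrapose! hz₁; simp [hz₁])

lemma Complex.norm_one_add_sq_le_of_mul_sin_add_mul_cos_eq_zero {z : ℂ} (hz : z.im ≠ 0)
    (hπ : ‖z‖ < Real.pi) (h : z.re * Real.sin z.im + z.im * Real.cos z.im = 0) :
    ‖1 + z‖ ^ 2 ≤ (1 + ‖z‖) ^ 2 - 4 / ‖z‖ := by
  obtain ⟨ρ, hre, him⟩ := polar_of_mul_sin_add_mul_cos_eq_zero h
  have hsq : z.im ^ 2 = ρ ^ 2 * Real.sin z.im ^ 2 := by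
    nth_rw 1 [him]; ring
  have hnorm : ‖z‖ = |ρ| := by
    rw [← sq_eq_sq₀ (norm_nonneg z) (abs_nonneg ρ), sq_abs, Complex.sq_norm, normSq_apply, hre]
    linear_combination hsq + ρ ^ 2 * Real.sin_sq_add_cos_sq z.im
  have hρ : 0 < ρ := pos_of_eq_mul_sin hz (hnorm ▸ hπ) him
  have hcos : 1 ≤ (ρ * Real.cos (z.im / 2)) ^ 2 :=
    one_le_sq_iff_one_le_abs _ |>.2 (one_le_abs_mul_cos_half hz him)
  have hhalf : Real.cos (z.im / 2) ^ 2 = 1 / 2 + Real.cos z.im / 2 := by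
    rw [Real.cos_sq, mul_div_cancel₀ _ two_ne_zero]
  have hdist : ((1 + ρ) ^ 2 - ‖1 + z‖ ^ 2) * ρ = 4 * (ρ * Real.cos (z.im / 2)) ^ 2 := by
    rw [Complex.sq_norm, normSq_apply, add_re, add_im, one_re, one_im, zero_add, hre]
    linear_combination (-ρ) * hsq - ρ ^ 3 * Real.sin_sq_add_cos_sq z.im - 4 * ρ ^ 2 * hhalf
  rw [hnorm, abs_of_pos hρ, le_sub_iff_add_le, ← le_sub_iff_add_le', div_le_iff₀ hρ]
  linarith

lemma one_add_sq_sub_four_div_lt {ε r : ℝ} (hε₀ : 0 < ε) (hε₁ : ε ≤ 1 / 9) (hr₀ : 0 < r)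
    (hr : r < 1 + ε) : (1 + r) ^ 2 - 4 / r < 9 * ε := by
  rw [sub_lt_iff_lt_add, ← sub_lt_iff_lt_add', lt_div_iff₀ hr₀]
  -- `r ↦ r (1 + r)² - 9εr` is increasing, and negative at `r = 1 + ε`
  have hmono : 0 < r ^ 2 + r * (1 + ε) + (1 + ε) ^ 2 + 2 * r + 2 * (1 + ε) + 1 - 9 * ε := by
    nlinarith
  nlinarith [mul_pos (sub_pos.2 hr) hmono, mul_pos hε₀ hε₀, mul_pos (mul_pos hε₀ hε₀) hε₀]

lemma nine_mul_lt_rpow_one_div_four_sq {ε : ℝ} (hε₀ : 0 < ε) (hε₁ : ε < 1 / 81) :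
    9 * ε < (ε ^ ((1 : ℝ) / 4)) ^ 2 := by
  rw [← Real.rpow_natCast, ← Real.rpow_mul hε₀.le, show (1 : ℝ) / 4 * (2 : ℕ) = 1 / 2 by norm_num,
    ← Real.sqrt_eq_rpow, Real.lt_sqrt (by positivity)]
  nlinarith

/-- Lemma 3(ii): for `ε ∈ (0, 1/100]`, the map `z ↦ z e^{z+1}` maps the region
`{|z| < 1+ε, |1+z| > ε^{1/4}}` into `ℂ ∖ (-∞, -1]`. -/
theorem w_avoids_slit_on_Dcal (ε : ℝ) (hε0 : 0 < ε) (hε1 : ε ≤ 1 / 100) :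
    ∀ z : ℂ, ‖z‖ < 1 + ε → ε ^ ((1 : ℝ) / 4) < ‖1 + z‖ →
      ¬((z * Complex.exp (z + 1)).im = 0 ∧ (z * Complex.exp (z + 1)).re ≤ -1) := by
  intro z hz hz₁ ⟨him, hre⟩
  have hroot : 0 ≤ ε ^ ((1 : ℝ) / 4) := Real.rpow_nonneg hε0.le _
  by_cases hreal : z.im = 0
  · have hz₁' : z ≠ -1 := by rintro rfl; simp at hz₁; linarith
    linarith [neg_one_lt_re_mul_exp_add_one hreal hz₁']
  · rw [im_mul_exp_add_one, mul_eq_zero] at him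
    have hcurve := him.resolve_left (Real.exp_pos _).ne'
    have hnorm₀ : 0 < ‖z‖ := norm_pos_iff.2 fun h ↦ hreal (by simp [h])
    have hle := norm_one_add_sq_le_of_mul_sin_add_mul_cos_eq_zero hreal
      (by linarith [Real.pi_gt_three]) hcurve
    have hlt := one_add_sq_sub_four_div_lt hε0 (by linarith) hnorm₀ hz
    have hsmall := nine_mul_lt_rpow_one_div_four_sq hε0 (by linarith)
    nlinarith [pow_lt_pow_left₀ hz₁ hroot two_ne_zero]
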